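/- Let p be an odd prime and H_p the Heisenberg group of order p^3 over ZMod p. Let σ be a group automorphism of H_p fixing the center pointwise. Then no complex irreducible representation ρ of H_p of dimension p satisfies ρ^∨ ≅ ρ ∘ σ, where ρ^∨ is the dual (contragredient) representation. -/

import Mathlib

/-!
Schur's lemma makes the centre of `H_p` act on `ρ` through a character `ω`. An isomorphism
`ρ^∨ ≅ ρ ∘ σ` with `σ` trivial on the centre forces `ω⁻¹ = ω`; as central elements have odd
order `p`, `ω` is trivial. Commutators in `H_p` are central, so the operators `ρ g` then commute
pairwise; by Schur again they are scalars, every linear endomorphism of `ρ` is an intertwiner,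
and so `ρ` is one-dimensional, contradicting `dim ρ = p ≥ 2`.
-/

open Matrix

/-- The matrix [[1,a,c],[0,1,b],[0,0,1]]. -/
def heisMat (p : ℕ) (a b c : ZMod p) : Matrix (Fin 3) (Fin 3) (ZMod p) :=
  !![1, a, c; 0, 1, b; 0, 0, 1]

/-- The Heisenberg group mod `p`, as a subgroup of `GL₃(ZMod p)`. -/
def Heis (p : ℕ) : Subgroup (GL (Fin 3) (ZMod p)) where
  carrier := {g | ∃ a b c : ZMod p,
    (g : Matrix (Fin 3) (Fin 3) (ZMod p)) = heisMat p a b c}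
  one_mem' := ⟨0, 0, 0, by simp [heisMat, Matrix.one_fin_three]⟩
  mul_mem' := by
    rintro x y ⟨a, b, c, hx⟩ ⟨a', b', c', hy⟩
    refine ⟨a + a', b + b', c + c' + a * b', ?_⟩
    rw [Units.val_mul, hx, hy]
    ext i j
    fin_cases i <;> fin_cases j <;>
      simp [heisMat, Matrix.mul_apply, Fin.sum_univ_three, Matrix.vecHead, Matrix.vecTail] <;> ring
  inv_mem' := by
    rintro x ⟨a, b, c, hx⟩
    refine ⟨-a, -b, a * b - c, ?_⟩
    have h1 : (x : Matrix (Fin 3) (Fin 3) (ZMod p)) * heisMat p (-a) (-b) (a * b - c) = 1 := by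
      rw [hx]
      ext i j
      fin_cases i <;> fin_cases j <;>
        simp [heisMat, Matrix.mul_apply, Fin.sum_univ_three, Matrix.one_apply, Matrix.vecHead, Matrix.vecTail] <;> ring
    calc ((x⁻¹ : GL (Fin 3) (ZMod p)) : Matrix (Fin 3) (Fin 3) (ZMod p))
        = ↑x⁻¹ * 1 := by rw [mul_one]
      _ = ↑x⁻¹ * (↑x * heisMat p (-a) (-b) (a * b - c)) := by rw [h1]
      _ = (↑x⁻¹ * ↑x) * heisMat p (-a) (-b) (a * b - c) := by rw [mul_assoc]
      _ = heisMat p (-a) (-b) (a * b - c) := by rw [Units.inv_mul, one_mul]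

open CategoryTheory

lemma Module.finrank_le_one_of_forall_eq_smul_id {K V : Type*} [Field K] [AddCommGroup V]
    [Module K V] (h : ∀ f : V →ₗ[K] V, ∃ c : K, f = c • LinearMap.id) :
    Module.finrank K V ≤ 1 := by
  nontriviality V
  obtain ⟨v, hv⟩ := exists_ne (0 : V)
  obtain ⟨φ, hφ⟩ := Module.Projective.exists_dual_eq_one K hv
  refine finrank_le_one v fun w => ?_
  obtain ⟨c, hc⟩ := h (φ.smulRight w)
  exact ⟨c, by simpa [hφ] using (LinearMap.congr_fun hc v).symm⟩

namespace Representation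

variable {k G V : Type*} [Field k] [Group G] [AddCommGroup V] [Module k V]

lemma map_inv_eq_inv_smul_id (ρ : Representation k G V) {w : G} {c : k}
    (hc : ρ w = c • LinearMap.id) : ρ w⁻¹ = c⁻¹ • LinearMap.id := by
  have hw : ρ w * ρ w⁻¹ = 1 := by rw [← map_mul, mul_inv_cancel, map_one]
  rw [hc, ← Module.End.one_eq_id, smul_mul_assoc, one_mul] at hw
  calc ρ w⁻¹ = c⁻¹ • (c • ρ w⁻¹) := by
        obtain rfl | hc0 := eq_or_ne c 0
        · rw [zero_smul] at hw; exact (subsingleton_of_zero_eq_one hw).elim _ _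
        · rw [inv_smul_smul₀ hc0]
    _ = c⁻¹ • LinearMap.id := by rw [hw]; rfl

lemma dual_eq_smul_id (ρ : Representation k G V) {w : G} {c : k}
    (hc : ρ w = c • LinearMap.id) : ρ.dual w = c⁻¹ • LinearMap.id := by
  rw [dual_apply, map_inv_eq_inv_smul_id ρ hc]
  ext f v
  simp [Module.Dual.transpose_apply]

end Representation

lemma LinearMap.smul_id_injective {K V : Type*} [Field K] [AddCommGroup V] [Module K V]
    [Nontrivial V] : Function.Injective fun c : K => c • (LinearMap.id : V →ₗ[K] V) := by
  simpa only [← Module.algebraMap_end_eq_smul_id] using (algebraMap K (Module.End K V)).injective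

lemma eq_one_of_eq_inv_of_pow_eq_one {K : Type*} [GroupWithZero K] {c : K} {n : ℕ}
    (hn : Odd n) (hcn : c ^ n = 1) (hc : c = c⁻¹) : c = 1 := by
  obtain ⟨m, rfl⟩ := hn
  have hc0 : c ≠ 0 := by rintro rfl; simp at hcn
  have hsq : c ^ 2 = 1 := by rw [sq]; nth_rewrite 2 [hc]; exact mul_inv_cancel₀ hc0
  rwa [pow_succ, pow_mul, hsq, one_pow, one_mul] at hcn

namespace FDRep

variable {k G : Type*} [Field k]

lemma exists_eq_smul_id_of_commute [Monoid G] [IsAlgClosed k] (ρ : FDRep k G) [Simple ρ]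
    (f : ρ →ₗ[k] ρ) (hf : ∀ g, Commute f (ρ.ρ g)) : ∃ c : k, f = c • LinearMap.id := by
  let F : ρ ⟶ ρ :=
    ⟨ConcreteCategory.ofHom f, fun g => by ext v; exact LinearMap.congr_fun (hf g) v⟩
  obtain ⟨c, hc⟩ := endomorphism_simple_eq_smul_id k F
  exact ⟨c, LinearMap.ext fun v => congr($(congrArg Action.Hom.hom hc).hom v).symm⟩

lemma finrank_le_one_of_commute [Monoid G] [IsAlgClosed k] (ρ : FDRep k G) [Simple ρ]
    (h : ∀ g g', Commute (ρ.ρ g) (ρ.ρ g')) : Module.finrank k ρ ≤ 1 := by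
  refine Module.finrank_le_one_of_forall_eq_smul_id fun f =>
    exists_eq_smul_id_of_commute ρ f fun g => ?_
  obtain ⟨c, hc⟩ := exists_eq_smul_id_of_commute ρ (ρ.ρ g) (h g)
  rw [hc]
  exact (Commute.one_right f).smul_right c

variable [Group G]

lemma exists_eq_smul_id_of_mem_center [IsAlgClosed k] (ρ : FDRep k G) [Simple ρ] {w : G}
    (hw : w ∈ Subgroup.center G) : ∃ c : k, ρ.ρ w = c • LinearMap.id :=
  exists_eq_smul_id_of_commute ρ _ fun g =>
    (Commute.symm (Subgroup.mem_center_iff.mp hw g)).map ρ.ρ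

lemma eq_inv_of_iso_dual_comp (ρ : FDRep k G) [Nontrivial ρ] (σ : G →* G)
    (i : of (Representation.dual ρ.ρ) ≅ of (ρ.ρ.comp σ)) {w : G} (hw : σ w = w) {c : k}
    (hc : ρ.ρ w = c • LinearMap.id) : c = c⁻¹ := by
  have h := Iso.conj_ρ i w
  rw [of_ρ', of_ρ', MonoidHom.comp_apply, hw, hc, Representation.dual_eq_smul_id _ hc,
    map_smul, LinearEquiv.conj_id] at h
  exact LinearMap.smul_id_injective h

lemma map_eq_one_of_iso_dual_comp [IsAlgClosed k] (ρ : FDRep k G) [Simple ρ] [Nontrivial ρ]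
    (σ : G →* G) (i : of (Representation.dual ρ.ρ) ≅ of (ρ.ρ.comp σ)) {w : G}
    (hwc : w ∈ Subgroup.center G) (hσ : σ w = w) {n : ℕ} (hn : Odd n) (hwn : w ^ n = 1) :
    ρ.ρ w = 1 := by
  obtain ⟨c, hc⟩ := exists_eq_smul_id_of_mem_center ρ hwc
  have hcn : c ^ n = 1 := by
    have h := congrArg ρ.ρ hwn
    rw [map_pow, map_one, hc, ← Module.End.one_eq_id, smul_pow, one_pow] at h
    exact LinearMap.smul_id_injective (h.trans (one_smul k _).symm)
  rw [hc, eq_one_of_eq_inv_of_pow_eq_one hn hcn (eq_inv_of_iso_dual_comp ρ σ i hσ hc), one_smul]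
  rfl

end FDRep

lemma heisMat_mul {p : ℕ} (a b c a' b' c' : ZMod p) :
    heisMat p a b c * heisMat p a' b' c' = heisMat p (a + a') (b + b') (c + c' + a * b') := by
  simp only [heisMat, Matrix.mul_fin_three]
  ext i j
  fin_cases i <;> fin_cases j <;> simp <;> ring

lemma heisMat_zero {p : ℕ} : heisMat p 0 0 0 = 1 := by
  simp [heisMat, Matrix.one_fin_three]

namespace Heis

variable {p : ℕ}

variable (p) in
def mk (a b c : ZMod p) : Heis p :=
  ⟨⟨heisMat p a b c, heisMat p (-a) (-b) (a * b - c),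
    by rw [heisMat_mul]; ring_nf; exact heisMat_zero,
    by rw [heisMat_mul]; ring_nf; exact heisMat_zero⟩, a, b, c, rfl⟩

lemma mk_mul (a b c a' b' c' : ZMod p) :
    mk p a b c * mk p a' b' c' = mk p (a + a') (b + b') (c + c' + a * b') :=
  Subtype.ext <| Units.ext <| heisMat_mul a b c a' b' c'

lemma mk_zero : mk p 0 0 0 = 1 :=
  Subtype.ext <| Units.ext heisMat_zero

lemma exists_eq_mk (x : Heis p) : ∃ a b c, x = mk p a b c := by
  obtain ⟨a, b, c, h⟩ := x.2
  exact ⟨a, b, c, Subtype.ext (Units.ext h)⟩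

lemma mk_zero_zero_mem_center (t : ZMod p) : mk p 0 0 t ∈ Subgroup.center (Heis p) := by
  refine Subgroup.mem_center_iff.mpr fun x => ?_
  obtain ⟨a, b, c, rfl⟩ := exists_eq_mk x
  rw [mk_mul, mk_mul]
  ring_nf

lemma mk_zero_zero_pow (t : ZMod p) (n : ℕ) : mk p 0 0 t ^ n = mk p 0 0 (n * t) := by
  induction n with
  | zero => simp [mk_zero]
  | succ n ih => rw [pow_succ, ih, mk_mul]; push_cast; ring_nf

lemma mk_zero_zero_pow_char (t : ZMod p) : mk p 0 0 t ^ p = 1 := by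
  rw [mk_zero_zero_pow, ZMod.natCast_self, zero_mul, mk_zero]

lemma exists_mul_eq_mk_mul (x y : Heis p) : ∃ t, x * y = mk p 0 0 t * (y * x) := by
  obtain ⟨a, b, c, rfl⟩ := exists_eq_mk x
  obtain ⟨a', b', c', rfl⟩ := exists_eq_mk y
  refine ⟨a * b' - a' * b, ?_⟩
  simp only [mk_mul]
  ring_nf

lemma commute_map_of_map_mk_eq_one {M : Type*} [Monoid M] (f : Heis p →* M)
    (hf : ∀ t, f (mk p 0 0 t) = 1) (x y : Heis p) : Commute (f x) (f y) := by
  obtain ⟨t, ht⟩ := exists_mul_eq_mk_mul x y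
  rw [Commute, SemiconjBy, ← map_mul, ← map_mul, ht, map_mul, hf, one_mul]

end Heis

/-- If `p` is an odd prime and `σ` an automorphism of the Heisenberg group `H_p` fixing the
center pointwise, then no `p`-dimensional complex irreducible representation `ρ` of `H_p`
satisfies `ρ^∨ ≅ ρ ∘ σ`. -/
theorem heis_no_conjugate_selfdual_irrep (p : ℕ) [Fact p.Prime] (hp : Odd p)
    (σ : ↥(Heis p) ≃* ↥(Heis p)) (hσ : ∀ z ∈ Subgroup.center ↥(Heis p), σ z = z)
    (ρ : FDRep ℂ ↥(Heis p)) (hρ : Simple ρ) (hd : Module.finrank ℂ ρ = p) :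
    IsEmpty (FDRep.of (Representation.dual ρ.ρ) ≅
      FDRep.of (MonoidHom.comp ρ.ρ σ.toMonoidHom)) := by
  refine ⟨fun i => ?_⟩
  have hp2 : 2 ≤ p := (Fact.out : p.Prime).two_le
  have : Nontrivial ρ := Module.nontrivial_of_finrank_pos (R := ℂ) (by omega)
  have hcenter (t : ZMod p) : ρ.ρ (Heis.mk p 0 0 t) = 1 :=
    FDRep.map_eq_one_of_iso_dual_comp ρ σ.toMonoidHom i (Heis.mk_zero_zero_mem_center t)
      (hσ _ (Heis.mk_zero_zero_mem_center t)) hp (Heis.mk_zero_zero_pow_char t)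
  have := FDRep.finrank_le_one_of_commute ρ (Heis.commute_map_of_map_mk_eq_one ρ.ρ hcenter)
  omega
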